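/- arXiv:2311.08492 — 4 statements merged into one kernel-verified Lean document; each statement's English description precedes it below -/
import Mathlib

section
/- Let Q and Q' be compact Hausdorff spaces such that Q' is the image of Q under a continuous surjection, and let X be a topological space. If X × Q is a normal Hausdorff space, then X × Q' is a normal Hausdorff space. -/
open Set TopologicalSpace

/-!
`id × f : X × Q → X × Q'` is proper, since `f` is a continuous map from a compact space to a
Hausdorff one; so it is a closed continuous surjection, and such maps carry normality forward
(pull two disjoint closed sets back, separate them by `U, V`, and push forward the complements of
`g '' Uᶜ` and `g '' Vᶜ`). Hausdorffness passes to `X`, which embeds in `X × Q` when `Q` is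
nonempty, and hence to `X × Q'`.
-/

/-- A map `G` on ordered pairs of sets is intersection preserving on a domain `D` if
`G(A,B) ∩ G(A',B') = G(A ∩ A', B ∩ B')` for all pairs in `D`. -/
def IntersectionPreserving {T X : Type*} (D : Set (Set T × Set T))
    (G : Set T × Set T → Set X) : Prop :=
  ∀ p ∈ D, ∀ q ∈ D, G p ∩ G q = G (p.1 ∩ q.1, p.2 ∩ q.2)

/-- `S_𝓑`: the pairs `(B, D)` of members of the base with disjoint closures. -/
def SB {T : Type*} [TopologicalSpace T] (𝓑 : Set (Set T)) : Set (Set T × Set T) :=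
  {p | p.1 ∈ 𝓑 ∧ p.2 ∈ 𝓑 ∧ closure p.1 ∩ closure p.2 = ∅}

/-- `𝓑` is a base for the topology of `T` closed under (binary) unions and intersections. -/
def IsGoodBase {T : Type*} [TopologicalSpace T] (𝓑 : Set (Set T)) : Prop :=
  IsTopologicalBasis 𝓑 ∧ (∀ b ∈ 𝓑, ∀ d ∈ 𝓑, b ∪ d ∈ 𝓑) ∧ (∀ b ∈ 𝓑, ∀ d ∈ 𝓑, b ∩ d ∈ 𝓑)

/-- `G : S_𝓑 → 𝒫(X)` is the associated map of a `𝓑`-covering of `X`: it is intersection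
preserving, its values on `S_𝓑` are open, and they cover `X`. -/
def IsBCoveringMap {T X : Type*} [TopologicalSpace T] [TopologicalSpace X]
    (𝓑 : Set (Set T)) (G : Set T × Set T → Set X) : Prop :=
  IntersectionPreserving (SB 𝓑) G ∧ (∀ p ∈ SB 𝓑, IsOpen (G p)) ∧
    (⋃ p ∈ SB 𝓑, G p) = Set.univ

/-- A family `𝓖` of subsets of `X` is a `𝓑`-covering of `X` if it is the (surjective) image of
`S_𝓑` under some intersection preserving map whose values are open and cover `X`. -/
def IsBCovering {T X : Type*} [TopologicalSpace T] [TopologicalSpace X]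
    (𝓑 : Set (Set T)) (𝓖 : Set (Set X)) : Prop :=
  ∃ G : Set T × Set T → Set X, IsBCoveringMap 𝓑 G ∧ G '' (SB 𝓑) = 𝓖

/-- `G : 𝓑 × 𝓑 → 𝒫(X)` is the associated map of a pre-`𝓑`-covering of `X`: it is intersection
preserving on `𝓑 × 𝓑`, all its values on `𝓑 × 𝓑` are open, and its restriction to `S_𝓑`
is (the associated map of) a `𝓑`-covering, i.e. the values over `S_𝓑` already cover `X`. -/
def IsPreBCoveringMap {T X : Type*} [TopologicalSpace T] [TopologicalSpace X]
    (𝓑 : Set (Set T)) (G : Set T × Set T → Set X) : Prop :=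
  IntersectionPreserving (𝓑 ×ˢ 𝓑) G ∧ (∀ p ∈ 𝓑 ×ˢ 𝓑, IsOpen (G p)) ∧
    (⋃ p ∈ SB 𝓑, G p) = Set.univ

/-- A normal space: both T₄ (disjoint closed sets are separated) and Hausdorff. -/
def IsNormalHausdorff (X : Type*) [TopologicalSpace X] : Prop :=
  NormalSpace X ∧ T2Space X

/-- A perfect map: a continuous closed surjection all of whose fibers are compact. -/
def IsPerfectMap {X Y : Type*} [TopologicalSpace X] [TopologicalSpace Y] (p : X → Y) : Prop :=
  Continuous p ∧ IsClosedMap p ∧ Function.Surjective p ∧ ∀ y : Y, IsCompact (p ⁻¹' {y})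

/-- `𝓥` is a locally finite open refinement of `𝓖`: an open cover, locally finite, each of
whose members is contained in some member of `𝓖`. -/
def IsLocallyFiniteOpenRefinement {X : Type*} [TopologicalSpace X]
    (𝓖 𝓥 : Set (Set X)) : Prop :=
  (∀ v ∈ 𝓥, IsOpen v) ∧ ⋃₀ 𝓥 = Set.univ ∧
    (∀ x : X, ∃ U : Set X, IsOpen U ∧ x ∈ U ∧ {v ∈ 𝓥 | (v ∩ U).Nonempty}.Finite) ∧
    ∀ v ∈ 𝓥, ∃ u ∈ 𝓖, v ⊆ u

theorem IsClosedMap.normalSpace_of_surjective {X Y : Type*} [TopologicalSpace X]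
    [TopologicalSpace Y] [NormalSpace X] {g : X → Y} (hcl : IsClosedMap g) (hc : Continuous g)
    (hs : Function.Surjective g) : NormalSpace Y where
  normal s t hs_closed ht_closed hst := by
    obtain ⟨U, V, hU, hV, hsU, htV, hUV⟩ := normal_separation (hs_closed.preimage hc)
      (ht_closed.preimage hc) (hst.preimage g)
    refine ⟨(g '' Uᶜ)ᶜ, (g '' Vᶜ)ᶜ, (hcl _ hU.isClosed_compl).isOpen_compl,
      (hcl _ hV.isClosed_compl).isOpen_compl, ?_, ?_, ?_⟩
    · rintro y hy ⟨x, hx, rfl⟩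
      exact hx (hsU hy)
    · rintro y hy ⟨x, hx, rfl⟩
      exact hx (htV hy)
    · rw [Set.disjoint_left]
      rintro y hyU hyV
      obtain ⟨x, rfl⟩ := hs y
      by_cases hxU : x ∈ U
      · exact hyV ⟨x, Set.disjoint_left.mp hUV hxU, rfl⟩
      · exact hyU ⟨x, hxU, rfl⟩

theorem T2Space.of_prod_left {X Y : Type*} [TopologicalSpace X] [TopologicalSpace Y]
    [Nonempty Y] [T2Space (X × Y)] : T2Space X :=
  (isEmbedding_prodMkLeft (Classical.arbitrary Y)).t2Space

theorem stmt_7_general {Q Q' X : Type*} [TopologicalSpace Q] [TopologicalSpace Q'] [TopologicalSpace X]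
    [CompactSpace Q] [T2Space Q']
    (f : Q → Q') (hfc : Continuous f) (hfs : Function.Surjective f)
    (h : IsNormalHausdorff (X × Q)) : IsNormalHausdorff (X × Q') := by
  obtain ⟨hN, hT2⟩ := h
  have hproper : IsProperMap (Prod.map id f : X × Q → X × Q') :=
    isProperMap_id.prodMap hfc.isProperMap
  refine ⟨hproper.isClosedMap.normalSpace_of_surjective hproper.continuous
    (Function.surjective_id.prodMap hfs), ?_⟩
  cases isEmpty_or_nonempty Q' with
  | inl _ => infer_instance
  | inr hQ' =>
    have : Nonempty Q := hQ'.map (Function.surjInv hfs)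
    have : T2Space X := T2Space.of_prod_left (Y := Q)
    infer_instance

/-- (Morita) If `Q, Q'` are compact Hausdorff, `Q'` is a continuous image of `Q`, and
`X × Q` is normal Hausdorff, then `X × Q'` is normal Hausdorff. -/
theorem stmt_7 {Q Q' X : Type*} [TopologicalSpace Q] [TopologicalSpace Q'] [TopologicalSpace X]
    [CompactSpace Q] [T2Space Q] [CompactSpace Q'] [T2Space Q']
    (f : Q → Q') (hfc : Continuous f) (hfs : Function.Surjective f)
    (h : IsNormalHausdorff (X × Q)) : IsNormalHausdorff (X × Q') :=
  stmt_7_general f hfc hfs h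
end

section
/- Let T be a compact Hausdorff space, 𝓑 a base for the topology of T closed under finite unions and finite intersections, and p : X → Y a perfect map (continuous closed surjection with compact fibers). Let 𝓖' be a pre-𝓑-covering of X with intersection preserving associated map G : 𝓑 × 𝓑 → 𝓖'. For (B,D) ∈ 𝓑 × 𝓑 define H(B,D) = {y ∈ Y : p⁻¹{y} ⊆ G(B,D)}. Then the map (B,D) ↦ H(B,D) is intersection preserving and {H(B,D) : (B,D) ∈ 𝓑 × 𝓑} is an open cover of Y. -/
open Set TopologicalSpace

lemma finset_union_mem {T : Type*} {𝓑 : Set (Set T)}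
    (hU : ∀ b ∈ 𝓑, ∀ d ∈ 𝓑, b ∪ d ∈ 𝓑) {ι : Type*} (f : ι → Set T)
    (s : Finset ι) (hs : s.Nonempty) (hf : ∀ i ∈ s, f i ∈ 𝓑) :
    (⋃ i ∈ s, f i) ∈ 𝓑 := by
  induction hs using Finset.Nonempty.cons_induction with
  | singleton a => simpa using hf a (by simp)
  | cons a s h hs ih =>
    classical
    rw [Finset.cons_eq_insert, Finset.set_biUnion_insert]
    exact hU _ (hf a (by simp)) _ (ih fun i hi => hf i (Finset.mem_cons_of_mem hi))

/-- Let `p : X → Y` be a perfect map and `G` the associated map of a pre-`𝓑`-covering of `X`.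
Then `H(B,D) = {y | p⁻¹{y} ⊆ G(B,D)}` is intersection preserving on `𝓑 × 𝓑` and
`{H(B,D) : (B,D) ∈ 𝓑 × 𝓑}` is an open cover of `Y`. -/
theorem stmt_9 {T X Y : Type*} [TopologicalSpace T] [TopologicalSpace X] [TopologicalSpace Y]
    [CompactSpace T] [T2Space T]
    (𝓑 : Set (Set T)) (h𝓑 : IsGoodBase 𝓑)
    (p : X → Y) (hp : IsPerfectMap p)
    (G : Set T × Set T → Set X) (hG : IsPreBCoveringMap 𝓑 G) :
    IntersectionPreserving (𝓑 ×ˢ 𝓑) (fun q => {y : Y | p ⁻¹' {y} ⊆ G q}) ∧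
      (∀ q ∈ 𝓑 ×ˢ 𝓑, IsOpen {y : Y | p ⁻¹' {y} ⊆ G q}) ∧
      (⋃ q ∈ 𝓑 ×ˢ 𝓑, {y : Y | p ⁻¹' {y} ⊆ G q}) = Set.univ := by
  obtain ⟨hGip, hGopen, hGcov⟩ := hG
  refine ⟨?_, ?_, ?_⟩
  · intro q hq q' hq'
    ext y
    simp only [Set.mem_inter_iff, Set.mem_setOf_eq, Set.subset_inter_iff]
    rw [← hGip q hq q' hq']
    exact Set.subset_inter_iff.symm
  · intro q hq
    have : {y : Y | p ⁻¹' {y} ⊆ G q} = (p '' (G q)ᶜ)ᶜ := by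
      ext y
      simp only [Set.mem_setOf_eq, Set.mem_compl_iff, Set.mem_image, not_exists]
      constructor
      · rintro h x ⟨hx, rfl⟩; exact hx (h rfl)
      · intro h x hx
        by_contra hc
        exact h x ⟨hc, hx⟩
    rw [this]
    exact (hp.2.1 _ (hGopen q hq).isClosed_compl).isOpen_compl
  · rw [Set.eq_univ_iff_forall]
    intro y
    -- cover the fiber
    have hfib : p ⁻¹' {y} ⊆ ⋃ i : SB 𝓑, G i := by
      intro x _
      have : x ∈ ⋃ q ∈ SB 𝓑, G q := hGcov ▸ Set.mem_univ x
      simpa using this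
    obtain ⟨t, ht⟩ := (hp.2.2.2 y).elim_finite_subcover (fun i : SB 𝓑 => G i)
      (fun i => hGopen i.1 ⟨i.2.1, i.2.2.1⟩) hfib
    -- t is nonempty since fiber is nonempty (surjectivity)
    obtain ⟨x, hx⟩ := hp.2.2.1 y
    have hxfib : x ∈ p ⁻¹' {y} := hx
    have hxU := ht hxfib
    simp only [Set.mem_iUnion] at hxU
    obtain ⟨i0, hi0t, _⟩ := hxU
    have htne : t.Nonempty := ⟨i0, hi0t⟩
    set B : Set T := ⋃ i ∈ t, (i : Set T × Set T).1 with hB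
    set D : Set T := ⋃ i ∈ t, (i : Set T × Set T).2 with hD
    have hBmem : B ∈ 𝓑 := finset_union_mem h𝓑.2.1 _ t htne (fun i _ => i.2.1)
    have hDmem : D ∈ 𝓑 := finset_union_mem h𝓑.2.1 _ t htne (fun i _ => i.2.2.1)
    have hBD : (B, D) ∈ 𝓑 ×ˢ 𝓑 := ⟨hBmem, hDmem⟩
    have hsub : ∀ i ∈ t, G i ⊆ G (B, D) := by
      intro i hi
      have hi𝓑 : (i : Set T × Set T) ∈ 𝓑 ×ˢ 𝓑 := ⟨i.2.1, i.2.2.1⟩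
      have hkey := hGip i hi𝓑 (B, D) hBD
      have h1 : (i : Set T × Set T).1 ∩ B = (i : Set T × Set T).1 :=
        Set.inter_eq_left.mpr (fun z hz => Set.mem_biUnion hi hz)
      have h2 : (i : Set T × Set T).2 ∩ D = (i : Set T × Set T).2 :=
        Set.inter_eq_left.mpr (fun z hz => Set.mem_biUnion hi hz)
      rw [h1, h2] at hkey
      intro z hz
      have : z ∈ G i ∩ G (B, D) := by rw [hkey]; exact hz
      exact this.2
    have hfibsub : p ⁻¹' {y} ⊆ G (B, D) := by
      intro z hz
      have := ht hz
      simp only [Set.mem_iUnion] at this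
      obtain ⟨i, hit, hzi⟩ := this
      exact hsub i hit hzi
    simp only [Set.mem_iUnion]
    exact ⟨(B, D), hBD, hfibsub⟩
end

section
/- Let T be a compact Hausdorff space, 𝓑 a base for the topology of T closed under finite unions and finite intersections, X a topological space, and 𝓖 a 𝓑-covering of X with intersection preserving associated surjection G : S_𝓑 → 𝓖. Define K = (X × T) \ ⋃{G(B,D) × (T \ closure(B)) : (B,D) ∈ S_𝓑} and L = (X × T) \ ⋃{G(B,D) × (T \ closure(D)) : (B,D) ∈ S_𝓑}. Then K and L are disjoint closed subsets of X × T. -/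
open Set TopologicalSpace

/-- Let `G` be the associated map of a `𝓑`-covering of `X`, and let
`K = (X × T) \ ⋃ {G(B,D) × (T \ cl B) : (B,D) ∈ S_𝓑}` and
`L = (X × T) \ ⋃ {G(B,D) × (T \ cl D) : (B,D) ∈ S_𝓑}`.
Then `K` and `L` are disjoint closed subsets of `X × T`. -/
theorem stmt_11 {T X : Type*} [TopologicalSpace T] [TopologicalSpace X]
    [CompactSpace T] [T2Space T]
    (𝓑 : Set (Set T)) (h𝓑 : IsGoodBase 𝓑)
    (G : Set T × Set T → Set X) (hG : IsBCoveringMap 𝓑 G)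
    (K L : Set (X × T))
    (hKdef : K = Set.univ \ ⋃ q ∈ SB 𝓑, (G q) ×ˢ (closure q.1)ᶜ)
    (hLdef : L = Set.univ \ ⋃ q ∈ SB 𝓑, (G q) ×ˢ (closure q.2)ᶜ) :
    IsClosed K ∧ IsClosed L ∧ K ∩ L = ∅ := by
  obtain ⟨-, hopen, hcov⟩ := hG
  refine ⟨?_, ?_, ?_⟩
  · rw [hKdef]
    simpa [Set.diff_eq] using
      IsClosed.inter isClosed_univ (isOpen_biUnion fun q hq =>
        (hopen q hq).prod isClosed_closure.isOpen_compl).isClosed_compl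
  · rw [hLdef]
    simpa [Set.diff_eq] using
      IsClosed.inter isClosed_univ (isOpen_biUnion fun q hq =>
        (hopen q hq).prod isClosed_closure.isOpen_compl).isClosed_compl
  · ext ⟨x, t⟩
    simp only [hKdef, hLdef, Set.mem_inter_iff, Set.mem_diff, Set.mem_univ, true_and,
      Set.mem_iUnion, Set.mem_empty_iff_false, iff_false, not_and, not_not, not_forall,
      not_exists]
    intro hK
    have hx : x ∈ ⋃ p ∈ SB 𝓑, G p := by rw [hcov]; trivial
    obtain ⟨p, hp, hxp⟩ := Set.mem_iUnion₂.mp hx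
    have hdisj := hp.2.2
    by_cases ht : t ∈ closure p.1
    · exact ⟨p, hp, hxp, fun h => (Set.eq_empty_iff_forall_notMem.mp hdisj t) ⟨ht, h⟩⟩
    · exact absurd ((by simpa using hK p hp : x ∈ G p → t ∈ closure p.1) hxp) ht
end

section
/- Let T be a compact Hausdorff space, 𝓑 a base for the topology of T closed under finite unions and finite intersections, X a topological space, and 𝓖 a 𝓑-covering of X with intersection preserving associated surjection G : S_𝓑 → 𝓖. Define K = (X × T) \ ⋃{G(B,D) × (T \ closure(B)) : (B,D) ∈ S_𝓑} and L = (X × T) \ ⋃{G(B,D) × (T \ closure(D)) : (B,D) ∈ S_𝓑}, and for B, D ∈ 𝓑 define H(B,D) = {x ∈ X : K_x ⊆ B and L_x ⊆ D}, where K_x = {t ∈ T : (x,t) ∈ K} and L_x = {t ∈ T : (x,t) ∈ L}. Then H(B,D) ⊆ G(B,D) for every (B,D) ∈ S_𝓑. -/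
/-!
Fix `x ∈ H(B,D)`. Every `t ∉ B` lies outside `K_x`, so some `r ∈ S_𝓑` with `x ∈ G r` has
`t ∉ closure r.1`; by compactness of `T \ B` finitely many such `r` suffice, and likewise for
`T \ D`. The meet `p` of these finitely many pairs is again in `S_𝓑` with `x ∈ G p`, and it
satisfies `p.1 ⊆ B`, `p.2 ⊆ D`. An intersection preserving map is monotone, so
`x ∈ G p ⊆ G(B,D)`.
-/

open Set TopologicalSpace

theorem InfClosed.exists_le_of_finite {α : Type*} [SemilatticeInf α] {C : Set α}
    (hC : InfClosed C) {p₀ : α} (hp₀ : p₀ ∈ C) {b : Set α} (hb : b.Finite) (hbC : b ⊆ C) :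
    ∃ p ∈ C, ∀ r ∈ b, p ≤ r := by
  classical
  obtain ⟨u, rfl⟩ := hb.exists_finset_coe
  refine ⟨(insert p₀ u).inf' (Finset.insert_nonempty _ _) id,
    hC.finsetInf'_mem _ fun r hr => ?_,
    fun r hr => Finset.inf'_le id (Finset.mem_insert_of_mem hr)⟩
  rcases Finset.mem_insert.1 hr with rfl | hr
  exacts [hp₀, hbC hr]

theorem infClosed_SB {T : Type*} [TopologicalSpace T] {𝓑 : Set (Set T)}
    (h𝓑 : ∀ b ∈ 𝓑, ∀ d ∈ 𝓑, b ∩ d ∈ 𝓑) : InfClosed (SB 𝓑) := by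
  rintro p ⟨hp₁, hp₂, hp⟩ q ⟨hq₁, hq₂, -⟩
  refine ⟨h𝓑 _ hp₁ _ hq₁, h𝓑 _ hp₂ _ hq₂, subset_empty_iff.1 ?_⟩
  exact hp ▸ inter_subset_inter (closure_mono inter_subset_left) (closure_mono inter_subset_left)

namespace IntersectionPreserving

variable {T X : Type*} {D : Set (Set T × Set T)} {G : Set T × Set T → Set X}

theorem infClosed_setOf_mem (hG : IntersectionPreserving D G) (hD : InfClosed D) (x : X) :
    InfClosed {p | p ∈ D ∧ x ∈ G p} := by
  rintro p ⟨hp, hxp⟩ q ⟨hq, hxq⟩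
  exact ⟨hD hp hq, hG p hp q hq ▸ ⟨hxp, hxq⟩⟩

theorem subset_of_le (hG : IntersectionPreserving D G) {p q : Set T × Set T} (hp : p ∈ D)
    (hq : q ∈ D) (hpq : p ≤ q) : G p ⊆ G q := by
  have hG_inter : G p ∩ G q = G p := by
    rw [hG p hp q hq, inter_eq_left.2 hpq.1, inter_eq_left.2 hpq.2]
  exact hG_inter ▸ inter_subset_right

end IntersectionPreserving

theorem compl_subset_biUnion_of_fiber_subset {ι X T : Type*} {S : Set ι} {G : ι → Set X}
    {U : ι → Set T} {x : X} {B : Set T}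
    (h : {t | (x, t) ∈ univ \ ⋃ i ∈ S, G i ×ˢ U i} ⊆ B) :
    Bᶜ ⊆ ⋃ i ∈ {i | i ∈ S ∧ x ∈ G i}, U i := by
  intro t ht
  by_contra hcov
  refine ht (h ⟨mem_univ _, fun hmem => hcov ?_⟩)
  obtain ⟨i, hi, hxi, hti⟩ := by simpa only [mem_iUnion, mem_prod, exists_prop] using hmem
  exact mem_biUnion ⟨hi, hxi⟩ hti

theorem subset_of_compl_subset_biUnion_compl_closure {ι T : Type*} [TopologicalSpace T]
    {b : Set ι} {f : ι → Set T} {A B : Set T} (hB : Bᶜ ⊆ ⋃ i ∈ b, (closure (f i))ᶜ)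
    (hA : ∀ i ∈ b, A ⊆ f i) : A ⊆ B := by
  intro t htA
  by_contra htB
  obtain ⟨i, hi, hti⟩ := mem_iUnion₂.1 (hB htB)
  exact hti (subset_closure (hA i hi htA))

theorem stmt_12_general {T X : Type*} [TopologicalSpace T] [TopologicalSpace X]
    [CompactSpace T]
    (𝓑 : Set (Set T)) (h𝓑 : IsGoodBase 𝓑)
    (G : Set T × Set T → Set X) (hG : IsBCoveringMap 𝓑 G)
    (K L : Set (X × T))
    (hKdef : K = Set.univ \ ⋃ q ∈ SB 𝓑, (G q) ×ˢ (closure q.1)ᶜ)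
    (hLdef : L = Set.univ \ ⋃ q ∈ SB 𝓑, (G q) ×ˢ (closure q.2)ᶜ) :
    ∀ q ∈ SB 𝓑,
      {x : X | {t : T | (x, t) ∈ K} ⊆ q.1 ∧ {t : T | (x, t) ∈ L} ⊆ q.2} ⊆ G q := by
  obtain ⟨hIP, -, hCov⟩ := hG
  rintro q hq x ⟨hKx, hLx⟩
  have hC := hIP.infClosed_setOf_mem (infClosed_SB h𝓑.2.2) x
  have hcompact : ∀ b ∈ 𝓑, IsCompact bᶜ := fun b hb =>
    (h𝓑.1.isOpen hb).isClosed_compl.isCompact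
  obtain ⟨b₁, hb₁C, hb₁, hb₁cov⟩ := (hcompact _ hq.1).elim_finite_subcover_image
    (fun _ _ => isClosed_closure.isOpen_compl)
    (compl_subset_biUnion_of_fiber_subset (hKdef ▸ hKx))
  obtain ⟨b₂, hb₂C, hb₂, hb₂cov⟩ := (hcompact _ hq.2.1).elim_finite_subcover_image
    (fun _ _ => isClosed_closure.isOpen_compl)
    (compl_subset_biUnion_of_fiber_subset (hLdef ▸ hLx))
  obtain ⟨p₀, hp₀, hxp₀⟩ := mem_iUnion₂.1 (hCov ▸ mem_univ x)
  obtain ⟨p, ⟨hp, hxp⟩, hp_le⟩ :=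
    hC.exists_le_of_finite ⟨hp₀, hxp₀⟩ (hb₁.union hb₂) (union_subset hb₁C hb₂C)
  have hpq : p ≤ q :=
    ⟨subset_of_compl_subset_biUnion_compl_closure hb₁cov fun r hr => (hp_le r (.inl hr)).1,
      subset_of_compl_subset_biUnion_compl_closure hb₂cov fun r hr => (hp_le r (.inr hr)).2⟩
  exact hIP.subset_of_le hp hq hpq hxp

/-- With `K`, `L` as in the previous statement, define
`H(B,D) = {x | K_x ⊆ B ∧ L_x ⊆ D}`. Then `H(B,D) ⊆ G(B,D)` for every `(B,D) ∈ S_𝓑`. -/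
theorem stmt_12 {T X : Type*} [TopologicalSpace T] [TopologicalSpace X]
    [CompactSpace T] [T2Space T]
    (𝓑 : Set (Set T)) (h𝓑 : IsGoodBase 𝓑)
    (G : Set T × Set T → Set X) (hG : IsBCoveringMap 𝓑 G)
    (K L : Set (X × T))
    (hKdef : K = Set.univ \ ⋃ q ∈ SB 𝓑, (G q) ×ˢ (closure q.1)ᶜ)
    (hLdef : L = Set.univ \ ⋃ q ∈ SB 𝓑, (G q) ×ˢ (closure q.2)ᶜ) :
    ∀ q ∈ SB 𝓑,
      {x : X | {t : T | (x, t) ∈ K} ⊆ q.1 ∧ {t : T | (x, t) ∈ L} ⊆ q.2} ⊆ G q :=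
  stmt_12_general 𝓑 h𝓑 G hG K L hKdef hLdef
end
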